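/- Let R ⊆ ℝ² be an axis-aligned rectangle all of whose sides have length at least 4, with center p. For every closed half-plane H₁ whose boundary line passes through p, there exists a point p' ∈ R with dist(p, p') ≤ 2 such that for every closed half-plane H₂ whose boundary line passes through p', there exist an axis-aligned rectangle Rec ⊆ R and a polygonal path P starting at p and ending at the center of Rec with the following properties: (1) every point of (R ∩ H₁ ∩ H₂) \ Rec is at distance at most 1 from some point of P; (2) Perimeter(R) − Perimeter(Rec) ≥ 2; (3) the length of P is at most 21·(Perimeter(R) − Perimeter(Rec)). -/

import Mathlib

open Real

noncomputable section

/-- Points of the Euclidean plane. -/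
abbrev Pt := EuclideanSpace ℝ (Fin 2)

/-- An axis-aligned rectangle (all sides of positive length, parallel to the axes),
given by the coordinates of its sides. -/
structure AARect where
  xmin : ℝ
  xmax : ℝ
  ymin : ℝ
  ymax : ℝ
  hx : xmin < xmax
  hy : ymin < ymax

/-- The set of points of an axis-aligned rectangle. -/
def AARect.set (R : AARect) : Set Pt :=
  {q | q 0 ∈ Set.Icc R.xmin R.xmax ∧ q 1 ∈ Set.Icc R.ymin R.ymax}

/-- The center of an axis-aligned rectangle. -/
def AARect.center (R : AARect) : Pt :=
  !₂[(R.xmin + R.xmax) / 2, (R.ymin + R.ymax) / 2]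

/-- The perimeter of an axis-aligned rectangle. -/
def AARect.perim (R : AARect) : ℝ :=
  2 * ((R.xmax - R.xmin) + (R.ymax - R.ymin))

/-- The length of the polygonal path with consecutive vertices `v 0, v 1, …, v N`:
the sum of the lengths of its segments. -/
def polyLength {N : ℕ} (v : Fin (N + 1) → Pt) : ℝ :=
  ∑ i : Fin N, dist (v i.castSucc) (v i.succ)

/-- The set of points of the polygonal path with consecutive vertices `v 0, …, v N`. -/
def polySet {N : ℕ} (v : Fin (N + 1) → Pt) : Set Pt :=
  ⋃ i : Fin N, segment ℝ (v i.castSucc) (v i.succ)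

/-- `H` is a closed half-plane whose boundary line passes through `p`. -/
def IsHalfPlaneThrough (H : Set Pt) (p : Pt) : Prop :=
  ∃ u : Pt, u ≠ 0 ∧ H = {q | (0 : ℝ) ≤ inner ℝ u (q - p)}

open scoped RealInnerProductSpace

/-!
Let `u` be the unit inner normal of `H₁` and `p' = p + 2u`. If `K = R ∩ H₁ ∩ H₂` misses one of
the four strips of width 1 along the sides of `R`, cut that strip off: the perimeter drops by 2
and the centre moves by `1/2`. Otherwise write `q = p + t u + s u⊥`. After reflecting the axes so
that `u` points into the closed positive quadrant, `K` has points near the left and near the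
bottom side of `R`; both have `t < 2`, and they lie on opposite sides of `s = 0` at distance
comparable to the half-extent `σ` of `R` in the `s`-direction. The boundary of `H₂` passes through
`(t, s) = (2, 0)` and keeps both points on the side of `K`, so its slope is at most about `2/σ`,
which confines `K` to the band `0 ≤ t ≤ 8`. A path from `p` sweeping this band along
`t = 1, 3, 5, 7` has length `O(Perimeter(R))` and passes within 1 of every point of `K`, so `R`
can be replaced by a unit square centred at `p`.
-/

lemma inner_fin_two (x y : Pt) : ⟪x, y⟫ = x 0 * y 0 + x 1 * y 1 := by
  simp [PiLp.inner_apply, Fin.sum_univ_two, mul_comm]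

lemma sq_add_sq_of_norm_eq_one {u : Pt} (hu : ‖u‖ = 1) : u 0 ^ 2 + u 1 ^ 2 = 1 := by
  simpa [Fin.sum_univ_two, hu] using (EuclideanSpace.real_norm_sq_eq u).symm

lemma abs_apply_le_of_norm_eq_one {u : Pt} (hu : ‖u‖ = 1) (i : Fin 2) : |u i| ≤ 1 := by
  simpa [hu] using PiLp.norm_apply_le u i

lemma norm_le_abs_add_abs (x : Pt) : ‖x‖ ≤ |x 0| + |x 1| := by
  rw [EuclideanSpace.norm_eq, Real.sqrt_le_left (by positivity), Fin.sum_univ_two]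
  simp only [Real.norm_eq_abs, sq_abs]
  nlinarith [abs_nonneg (x 0), abs_nonneg (x 1), sq_abs (x 0), sq_abs (x 1)]

lemma polyLength_two (x y : Pt) : polyLength ![x, y] = dist x y := by
  simp [polyLength]

lemma IsHalfPlaneThrough.exists_norm_eq_one {H : Set Pt} {p : Pt} (h : IsHalfPlaneThrough H p) :
    ∃ u : Pt, ‖u‖ = 1 ∧ H = {q | 0 ≤ ⟪u, q - p⟫} := by
  obtain ⟨u, hu, rfl⟩ := h
  refine ⟨‖u‖⁻¹ • u, norm_smul_inv_norm hu, ?_⟩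
  ext q
  simp [inner_smul_left, mul_nonneg_iff_of_pos_left (inv_pos.mpr (norm_pos_iff.mpr hu))]

def rot90 (u : Pt) : Pt := !₂[-u 1, u 0]

lemma norm_rot90 (u : Pt) : ‖rot90 u‖ = ‖u‖ := by
  simp [EuclideanSpace.norm_eq, rot90, Fin.sum_univ_two, add_comm]

lemma eq_inner_smul_add_inner_rot90_smul {u : Pt} (hu : ‖u‖ = 1) (x : Pt) :
    x = ⟪u, x⟫ • u + ⟪rot90 u, x⟫ • rot90 u := by
  have h := sq_add_sq_of_norm_eq_one hu
  ext i
  fin_cases i <;> simp [inner_fin_two, rot90] <;> linear_combination (-x _) * h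

def frame (p u : Pt) (z : ℝ × ℝ) : Pt := p + z.1 • u + z.2 • rot90 u

section Frame

variable {p u : Pt}

lemma frame_zero : frame p u (0, 0) = p := by simp [frame]

lemma eq_frame_inner (hu : ‖u‖ = 1) (q : Pt) :
    q = frame p u (⟪u, q - p⟫, ⟪rot90 u, q - p⟫) := by
  simp only [frame, add_assoc, ← eq_inner_smul_add_inner_rot90_smul hu]
  abel

lemma dist_frame_le (hu : ‖u‖ = 1) (z z' : ℝ × ℝ) :
    dist (frame p u z) (frame p u z') ≤ |z.1 - z'.1| + |z.2 - z'.2| := by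
  have : frame p u z - frame p u z' = (z.1 - z'.1) • u + (z.2 - z'.2) • rot90 u := by
    simp only [frame]; module
  rw [dist_eq_norm, this]
  refine (norm_add_le _ _).trans_eq ?_
  simp [norm_smul, norm_rot90, hu]

lemma frame_mem_segment {α s τ : ℝ} (hs : |s| ≤ |τ|) :
    frame p u (α, s) ∈ segment ℝ (frame p u (α, τ)) (frame p u (α, -τ)) := by
  let f : ℝ →ᵃ[ℝ] Pt := AffineMap.lineMap (frame p u (α, 0)) (frame p u (α, 1))
  have hf : ∀ s, f s = frame p u (α, s) := by
    intro s
    simp [f, AffineMap.lineMap_apply, frame]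
    module
  rw [← hf, ← hf, ← hf, ← image_segment, segment_eq_uIcc]
  refine Set.mem_image_of_mem f (Set.mem_uIcc.mpr ?_)
  obtain ⟨h₁, h₂⟩ := abs_le.mp hs
  rcases le_total 0 τ with hτ | hτ
  · rw [abs_of_nonneg hτ] at h₁ h₂
    exact .inr ⟨h₁, h₂⟩
  · rw [abs_of_nonpos hτ] at h₁ h₂
    exact .inl ⟨by linarith, by linarith⟩

end Frame

namespace AARect

lemma center_zero (R : AARect) : R.center 0 = (R.xmin + R.xmax) / 2 := rfl

lemma center_one (R : AARect) : R.center 1 = (R.ymin + R.ymax) / 2 := rfl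

lemma mem_set_iff {R : AARect} {q : Pt} : q ∈ R.set ↔
    |(q - R.center) 0| ≤ (R.xmax - R.xmin) / 2 ∧ |(q - R.center) 1| ≤ (R.ymax - R.ymin) / 2 := by
  simp only [AARect.set, Set.mem_ofPred_eq, Set.mem_Icc, PiLp.sub_apply, R.center_zero,
    R.center_one, abs_le]
  constructor <;> rintro ⟨⟨_, _⟩, _, _⟩ <;> refine ⟨⟨?_, ?_⟩, ?_, ?_⟩ <;> linarith

lemma abs_inner_rot90_sub_center_le {R : AARect} {u q : Pt} (hu : ‖u‖ = 1) (hq : q ∈ R.set) :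
    |⟪rot90 u, q - R.center⟫| ≤ R.perim / 4 := by
  obtain ⟨hX, hY⟩ := mem_set_iff.mp hq
  have h₀ := abs_apply_le_of_norm_eq_one hu 0
  have h₁ := abs_apply_le_of_norm_eq_one hu 1
  calc |⟪rot90 u, q - R.center⟫|
      ≤ |u 1| * |(q - R.center) 0| + |u 0| * |(q - R.center) 1| := by
        rw [inner_fin_two, ← abs_mul, ← abs_mul]
        simpa [rot90] using abs_add_le (-(u 1 * (q - R.center) 0)) (u 0 * (q - R.center) 1)
    _ ≤ 1 * ((R.xmax - R.xmin) / 2) + 1 * ((R.ymax - R.ymin) / 2) := by gcongr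
    _ = R.perim / 4 := by rw [perim]; ring

@[simps]
def shrink (R : AARect) (l r b t : ℝ) (hx : l + r < R.xmax - R.xmin)
    (hy : b + t < R.ymax - R.ymin) : AARect where
  xmin := R.xmin + l
  xmax := R.xmax - r
  ymin := R.ymin + b
  ymax := R.ymax - t
  hx := by linarith
  hy := by linarith

def Reduces (R : AARect) (K : Set Pt) : Prop :=
  ∃ Rec : AARect, Rec.set ⊆ R.set ∧
    ∃ (N : ℕ) (v : Fin (N + 1) → Pt),
      v 0 = R.center ∧ v (Fin.last N) = Rec.center ∧
      (∀ q ∈ K \ Rec.set, ∃ y ∈ polySet v, dist q y ≤ 1) ∧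
      2 ≤ R.perim - Rec.perim ∧
      polyLength v ≤ 21 * (R.perim - Rec.perim)

section Shrink

variable {R : AARect} {K : Set Pt} {l r b t : ℝ} {hx : l + r < R.xmax - R.xmin}
  {hy : b + t < R.ymax - R.ymin}

lemma shrink_set_subset (hl : 0 ≤ l) (hr : 0 ≤ r) (hb : 0 ≤ b) (ht : 0 ≤ t) :
    (R.shrink l r b t hx hy).set ⊆ R.set := by
  rintro q ⟨⟨hx₁, hx₂⟩, hy₁, hy₂⟩
  simp only [shrink_xmin, shrink_xmax, shrink_ymin, shrink_ymax] at hx₁ hx₂ hy₁ hy₂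
  exact ⟨⟨by linarith, by linarith⟩, by linarith, by linarith⟩

lemma perim_sub_perim_shrink :
    R.perim - (R.shrink l r b t hx hy).perim = 2 * (l + r + b + t) := by
  simp only [perim, shrink]
  ring

lemma center_shrink :
    (R.shrink l r b t hx hy).center = R.center + !₂[(l - r) / 2, (b - t) / 2] := by
  ext i
  fin_cases i <;> simp [center, shrink] <;> ring

lemma reduces_of_shrink (hl : 0 ≤ l) (hr : 0 ≤ r) (hb : 0 ≤ b) (ht : 0 ≤ t)
    (h1 : 1 ≤ l + r + b + t) {N : ℕ} (v : Fin (N + 1) → Pt) (hv₀ : v 0 = R.center)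
    (hv : v (Fin.last N) = (R.shrink l r b t hx hy).center)
    (hcover : ∀ q ∈ K \ (R.shrink l r b t hx hy).set, ∃ y ∈ polySet v, dist q y ≤ 1)
    (hlen : polyLength v ≤ 42 * (l + r + b + t)) : R.Reduces K :=
  ⟨_, shrink_set_subset hl hr hb ht, N, v, hv₀, hv, hcover,
    by rw [perim_sub_perim_shrink]; linarith, by rw [perim_sub_perim_shrink]; linarith⟩

lemma reduces_of_subset_shrink (hl : 0 ≤ l) (hr : 0 ≤ r) (hb : 0 ≤ b) (ht : 0 ≤ t)
    (h1 : 1 ≤ l + r + b + t) (hK : K ⊆ (R.shrink l r b t hx hy).set) : R.Reduces K := by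
  refine reduces_of_shrink hl hr hb ht h1 ![R.center, (R.shrink l r b t hx hy).center] rfl rfl
    (by simp [Set.sdiff_eq_empty.mpr hK]) ?_
  have hlr : |(l - r) / 2| ≤ (l + r) / 2 := abs_le.mpr ⟨by linarith, by linarith⟩
  have hbt : |(b - t) / 2| ≤ (b + t) / 2 := abs_le.mpr ⟨by linarith, by linarith⟩
  calc polyLength ![R.center, (R.shrink l r b t hx hy).center]
      = ‖!₂[(l - r) / 2, (b - t) / 2]‖ := by
        rw [polyLength_two, center_shrink, dist_self_add_right]
    _ ≤ |(l - r) / 2| + |(b - t) / 2| := norm_le_abs_add_abs _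
    _ ≤ 42 * (l + r + b + t) := by linarith

end Shrink

lemma reduces_or_strips {R : AARect} {K : Set Pt} (hK : K ⊆ R.set)
    (h4x : 4 ≤ R.xmax - R.xmin) (h4y : 4 ≤ R.ymax - R.ymin) :
    R.Reduces K ∨ ((∃ q ∈ K, q 0 < R.xmin + 1) ∧ (∃ q ∈ K, R.xmax - 1 < q 0) ∧
      (∃ q ∈ K, q 1 < R.ymin + 1) ∧ (∃ q ∈ K, R.ymax - 1 < q 1)) := by
  by_cases hL : ∀ q ∈ K, R.xmin + 1 ≤ q 0
  · refine .inl (reduces_of_subset_shrink (l := 1) (r := 0) (b := 0) (t := 0) (hx := by linarith)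
      (hy := by linarith) zero_le_one le_rfl le_rfl le_rfl (by norm_num) fun q hq => ?_)
    have := hK hq
    simp_all [AARect.set]
  by_cases hR : ∀ q ∈ K, q 0 ≤ R.xmax - 1
  · refine .inl (reduces_of_subset_shrink (l := 0) (r := 1) (b := 0) (t := 0) (hx := by linarith)
      (hy := by linarith) le_rfl zero_le_one le_rfl le_rfl (by norm_num) fun q hq => ?_)
    have := hK hq
    simp_all [AARect.set]
  by_cases hD : ∀ q ∈ K, R.ymin + 1 ≤ q 1
  · refine .inl (reduces_of_subset_shrink (l := 0) (r := 0) (b := 1) (t := 0) (hx := by linarith)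
      (hy := by linarith) le_rfl le_rfl zero_le_one le_rfl (by norm_num) fun q hq => ?_)
    have := hK hq
    simp_all [AARect.set]
  by_cases hU : ∀ q ∈ K, q 1 ≤ R.ymax - 1
  · refine .inl (reduces_of_subset_shrink (l := 0) (r := 0) (b := 0) (t := 1) (hx := by linarith)
      (hy := by linarith) le_rfl le_rfl le_rfl zero_le_one (by norm_num) fun q hq => ?_)
    have := hK hq
    simp_all [AARect.set]
  push Not at hL hR hD hU
  exact .inr ⟨hL, hR, hD, hU⟩

end AARect

/-- Vertices, in the coordinates of `frame`, of a path from the origin that sweeps the band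
`0 ≤ t ≤ 8, |s| ≤ σ` along the lines `t = 1, 3, 5, 7` and returns to the origin. -/
def snake (σ : ℝ) : Fin 10 → ℝ × ℝ :=
  ![(0, 0), (1, σ), (1, -σ), (3, -σ), (3, σ), (5, σ), (5, -σ), (7, -σ), (7, σ), (0, 0)]

lemma sum_snake_steps {σ : ℝ} (hσ : 0 ≤ σ) :
    ∑ i : Fin 9, (|(snake σ i.castSucc).1 - (snake σ i.succ).1| +
      |(snake σ i.castSucc).2 - (snake σ i.succ).2|) = 14 + 10 * σ := by
  have h2σ : |σ + σ| = 2 * σ := by rw [abs_of_nonneg (by linarith)]; ring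
  have h2σ' : |-σ - σ| = 2 * σ := by rw [abs_sub_comm, sub_neg_eq_add, h2σ]
  norm_num [Fin.sum_univ_succ, snake, abs_of_nonneg hσ, h2σ, h2σ']
  ring

lemma exists_snake_run (σ : ℝ) {t : ℝ} (ht₀ : 0 ≤ t) (ht₈ : t ≤ 8) :
    ∃ (i : Fin 9) (α τ : ℝ), snake σ i.castSucc = (α, τ) ∧ snake σ i.succ = (α, -τ) ∧
      |τ| = |σ| ∧ |t - α| ≤ 1 := by
  rcases le_total t 2 with h2 | h2
  · exact ⟨1, 1, σ, rfl, rfl, rfl, abs_le.mpr ⟨by linarith, by linarith⟩⟩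
  rcases le_total t 4 with h4 | h4
  · exact ⟨3, 3, -σ, rfl, by simp [snake], abs_neg σ, abs_le.mpr ⟨by linarith, by linarith⟩⟩
  rcases le_total t 6 with h6 | h6
  · exact ⟨5, 5, σ, rfl, rfl, rfl, abs_le.mpr ⟨by linarith, by linarith⟩⟩
  · exact ⟨7, 7, -σ, rfl, by simp [snake], abs_neg σ, abs_le.mpr ⟨by linarith, by linarith⟩⟩

lemma AARect.reduces_of_subset_band {R : AARect} {K : Set Pt} {u : Pt}
    (h4x : 4 ≤ R.xmax - R.xmin) (h4y : 4 ≤ R.ymax - R.ymin) (hu : ‖u‖ = 1)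
    (hK : ∀ q ∈ K, q ∈ R.set ∧ 0 ≤ ⟪u, q - R.center⟫ ∧ ⟪u, q - R.center⟫ ≤ 8) :
    R.Reduces K := by
  set σ := R.perim / 4 with hσ
  have hσ4 : 4 ≤ σ := by rw [hσ, perim]; linarith
  refine reduces_of_shrink (l := (R.xmax - R.xmin - 1) / 2) (r := (R.xmax - R.xmin - 1) / 2)
    (b := (R.ymax - R.ymin - 1) / 2) (t := (R.ymax - R.ymin - 1) / 2) (hx := by linarith)
    (hy := by linarith) (by linarith) (by linarith) (by linarith) (by linarith) (by linarith)
    (fun i => frame R.center u (snake σ i)) frame_zero ?_ ?_ ?_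
  · simp [center_shrink, snake, frame_zero]
  · rintro q ⟨hqK, -⟩
    obtain ⟨hqR, ht₀, ht₈⟩ := hK q hqK
    obtain ⟨i, α, τ, hi, hi', hτ, hα⟩ := exists_snake_run σ ht₀ ht₈
    refine ⟨frame R.center u (α, ⟪rot90 u, q - R.center⟫), Set.mem_iUnion.mpr ⟨i, ?_⟩, ?_⟩
    · dsimp only
      rw [hi, hi']
      refine frame_mem_segment ?_
      rw [hτ, abs_of_nonneg (show 0 ≤ σ by linarith)]
      exact abs_inner_rot90_sub_center_le hu hqR
    · calc dist q (frame R.center u (α, ⟪rot90 u, q - R.center⟫))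
          = dist (frame R.center u (⟪u, q - R.center⟫, ⟪rot90 u, q - R.center⟫))
              (frame R.center u (α, ⟪rot90 u, q - R.center⟫)) := by
            rw [← eq_frame_inner hu q]
        _ ≤ _ := dist_frame_le hu _ _
        _ ≤ 1 := by simpa using hα
  · calc polyLength (fun i => frame R.center u (snake σ i))
        ≤ ∑ i : Fin 9, (|(snake σ i.castSucc).1 - (snake σ i.succ).1| +
          |(snake σ i.castSucc).2 - (snake σ i.succ).2|) :=
          Finset.sum_le_sum fun i _ => dist_frame_le hu _ _
      _ = 14 + 10 * σ := sum_snake_steps (by linarith)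
      _ ≤ _ := by rw [hσ, perim]; linarith

/-- In the `(s, t)`-plane: a half-plane `{c (t - 2) + d s ≥ 0}` with `d ≥ 0` that contains a
point `(sb, tb)` with `sb < 0 ≤ tb < 2` rises by at most `2 / |sb|` per unit of `s`. -/
lemma sub_two_mul_le_of_halfPlane {c d tb sb tq sq σ : ℝ} (hcd : c ≠ 0 ∨ d ≠ 0) (hd : 0 ≤ d)
    (hsb : sb < 0) (htb₀ : 0 ≤ tb) (htb₂ : tb < 2) (hσ : 0 ≤ σ) (hsq : sq ≤ σ)
    (hb : 0 ≤ c * (tb - 2) + d * sb) (hq : 0 ≤ c * (tq - 2) + d * sq) :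
    (tq - 2) * -sb ≤ 2 * σ := by
  have hc : c < 0 := by
    rcases lt_trichotomy c 0 with hc | rfl | hc
    · exact hc
    · have : d = 0 := by nlinarith
      simp_all
    · nlinarith
  have hdsb : d * -sb ≤ 2 * -c := by nlinarith
  have hq' : -c * (tq - 2) ≤ d * σ := by nlinarith [mul_le_mul_of_nonneg_left hsq hd]
  refine le_of_mul_le_mul_left ?_ (neg_pos.mpr hc)
  calc -c * ((tq - 2) * -sb) = -c * (tq - 2) * -sb := by ring
    _ ≤ d * σ * -sb := mul_le_mul_of_nonneg_right hq' (by linarith)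
    _ = σ * (d * -sb) := by ring
    _ ≤ σ * (2 * -c) := mul_le_mul_of_nonneg_left hdsb hσ
    _ = -c * (2 * σ) := by ring

/-- `R ∩ H₁ ∩ H₂` in coordinates centred at the centre of `R`, whose half-sides are `A` and `B`,
with `H₁ = {a ⬝ z ≥ 0}` and `H₂ = {w ⬝ (z - 2a) ≥ 0}`. -/
def InWedge (A B a₀ a₁ w₀ w₁ X Y : ℝ) : Prop :=
  |X| ≤ A ∧ |Y| ≤ B ∧ 0 ≤ a₀ * X + a₁ * Y ∧ 0 ≤ w₀ * (X - 2 * a₀) + w₁ * (Y - 2 * a₁)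

namespace InWedge

variable {A B a₀ a₁ w₀ w₁ X Y : ℝ}

lemma swap (h : InWedge A B a₀ a₁ w₀ w₁ X Y) : InWedge B A a₁ a₀ w₁ w₀ Y X := by
  obtain ⟨hX, hY, ht, hw⟩ := h
  exact ⟨hY, hX, by linarith, by linarith⟩

lemma reflect {e f : ℝ} (he : |e| = 1) (hf : |f| = 1) (h : InWedge A B a₀ a₁ w₀ w₁ X Y) :
    InWedge A B (e * a₀) (f * a₁) (e * w₀) (f * w₁) (e * X) (f * Y) := by
  obtain ⟨hX, hY, ht, hw⟩ := h
  have he₂ : e ^ 2 = 1 := by rw [← sq_abs, he, one_pow]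
  have hf₂ : f ^ 2 = 1 := by rw [← sq_abs, hf, one_pow]
  refine ⟨by rwa [abs_mul, he, one_mul], by rwa [abs_mul, hf, one_mul], ?_, ?_⟩
  · linear_combination ht - (a₀ * X) * he₂ - (a₁ * Y) * hf₂
  · linear_combination hw - (w₀ * (X - 2 * a₀)) * he₂ - (w₁ * (Y - 2 * a₁)) * hf₂

lemma sub_le (h : InWedge A B a₀ a₁ w₀ w₁ X Y) (hX : X ≤ -A + 1) (ha₀ : 0 ≤ a₀) (ha₁ : 0 ≤ a₁) :
    a₀ * A - a₁ * B ≤ a₀ := by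
  obtain ⟨-, hY, ht, -⟩ := h
  nlinarith [mul_le_mul_of_nonneg_left hX ha₀,
    mul_le_mul_of_nonneg_left ((le_abs_self Y).trans hY) ha₁]

/-- The point `(Xb, Yb)` near the bottom side has `t < 2` and `s ≤ -(B - 1) / a₀`, while
`|s| ≤ σ ≤ (B + 1) / a₀` on the whole wedge; `sub_two_mul_le_of_halfPlane` then gives
`t - 2 ≤ 2 (B + 1) / (B - 1) ≤ 6`. -/
lemma le_eight_of_bottom {Xb Yb : ℝ} (hB : 2 ≤ B) (ha₀ : 0 ≤ a₀) (ha₁ : 0 ≤ a₁)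
    (ha : a₀ ^ 2 + a₁ ^ 2 = 1) (hw : w₀ ≠ 0 ∨ w₁ ≠ 0) (hd : 0 ≤ a₀ * w₁ - a₁ * w₀)
    (hbal : a₀ * A - a₁ * B ≤ a₀) (hbal' : a₁ * B - a₀ * A ≤ a₁)
    (hb : InWedge A B a₀ a₁ w₀ w₁ Xb Yb) (hYb : Yb ≤ -B + 1)
    (hq : InWedge A B a₀ a₁ w₀ w₁ X Y) : a₀ * X + a₁ * Y ≤ 8 := by
  obtain ⟨hXb, -, htb, hb⟩ := hb
  obtain ⟨hX, hY, -, hq⟩ := hq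
  rw [abs_le] at hXb hX hY
  -- `w = c a + d a⊥` with `a⊥ = (-a₁, a₀)`
  set c := a₀ * w₀ + a₁ * w₁ with hc_def
  set d := a₀ * w₁ - a₁ * w₀ with hd_def
  have hlin : ∀ X Y, w₀ * (X - 2 * a₀) + w₁ * (Y - 2 * a₁) =
      c * (a₀ * X + a₁ * Y - 2) + d * (-a₁ * X + a₀ * Y) := by
    intro X Y
    rw [hc_def, hd_def]
    linear_combination (-(w₀ * X + w₁ * Y)) * ha
  have hcd : c ≠ 0 ∨ d ≠ 0 := by
    have hnorm : c ^ 2 + d ^ 2 = w₀ ^ 2 + w₁ ^ 2 := by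
      rw [hc_def, hd_def]
      linear_combination (w₀ ^ 2 + w₁ ^ 2) * ha
    by_contra! h
    rw [h.1, h.2] at hnorm
    rcases hw with hw | hw
    · exact hw (by nlinarith)
    · exact hw (by nlinarith)
  rw [hlin] at hb hq
  set σ := a₁ * A + a₀ * B
  have hsσ : -a₁ * X + a₀ * Y ≤ σ := by
    nlinarith [mul_le_mul_of_nonneg_left hX.1 ha₁, mul_le_mul_of_nonneg_left hY.2 ha₀]
  have hsb : B - 1 ≤ a₀ * -(-a₁ * Xb + a₀ * Yb) := by
    have : a₀ * -(-a₁ * Xb + a₀ * Yb) = a₁ * (a₀ * Xb + a₁ * Yb) - Yb := by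
      linear_combination (-Yb) * ha
    nlinarith
  have hsum : a₀ + a₁ < 2 := by nlinarith [sq_nonneg (a₀ - a₁)]
  have htb₂ : a₀ * Xb + a₁ * Yb < 2 := by
    nlinarith [mul_le_mul_of_nonneg_left hXb.2 ha₀, mul_le_mul_of_nonneg_left hYb ha₁]
  have hσB : a₀ * σ ≤ B + 1 := by
    have : a₀ * σ = a₁ * (a₀ * A - a₁ * B) + B := by linear_combination B * ha
    nlinarith [mul_le_mul_of_nonneg_left hbal ha₁]
  have key := sub_two_mul_le_of_halfPlane hcd hd (by nlinarith) htb htb₂ (by nlinarith) hsσ hb hq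
  by_contra! h8
  nlinarith [mul_le_mul_of_nonneg_left key ha₀]

lemma le_eight_of_nonneg {Xl Yl Xb Yb : ℝ} (hA : 2 ≤ A) (hB : 2 ≤ B)
    (ha₀ : 0 ≤ a₀) (ha₁ : 0 ≤ a₁) (ha : a₀ ^ 2 + a₁ ^ 2 = 1) (hw : w₀ ≠ 0 ∨ w₁ ≠ 0)
    (hl : InWedge A B a₀ a₁ w₀ w₁ Xl Yl) (hXl : Xl ≤ -A + 1)
    (hb : InWedge A B a₀ a₁ w₀ w₁ Xb Yb) (hYb : Yb ≤ -B + 1)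
    (hq : InWedge A B a₀ a₁ w₀ w₁ X Y) : a₀ * X + a₁ * Y ≤ 8 := by
  have hbal := hl.sub_le hXl ha₀ ha₁
  have hbal' := hb.swap.sub_le hYb ha₁ ha₀
  rcases le_total 0 (a₀ * w₁ - a₁ * w₀) with hd | hd
  · exact le_eight_of_bottom hB ha₀ ha₁ ha hw hd hbal hbal' hb hYb hq
  · have := le_eight_of_bottom hA ha₁ ha₀ (by linarith) hw.symm (by linarith)
      hbal' hbal hl.swap hXl hq.swap
    linarith

lemma le_eight (hA : 2 ≤ A) (hB : 2 ≤ B) (ha : a₀ ^ 2 + a₁ ^ 2 = 1) (hw : w₀ ≠ 0 ∨ w₁ ≠ 0)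
    (hL : ∃ X Y, InWedge A B a₀ a₁ w₀ w₁ X Y ∧ X ≤ -A + 1)
    (hR : ∃ X Y, InWedge A B a₀ a₁ w₀ w₁ X Y ∧ A - 1 ≤ X)
    (hD : ∃ X Y, InWedge A B a₀ a₁ w₀ w₁ X Y ∧ Y ≤ -B + 1)
    (hU : ∃ X Y, InWedge A B a₀ a₁ w₀ w₁ X Y ∧ B - 1 ≤ Y)
    (hq : InWedge A B a₀ a₁ w₀ w₁ X Y) : a₀ * X + a₁ * Y ≤ 8 := by
  obtain ⟨e, he, hea, Xl, Yl, hl, hXl⟩ : ∃ e : ℝ, |e| = 1 ∧ 0 ≤ e * a₀ ∧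
      ∃ X Y, InWedge A B a₀ a₁ w₀ w₁ X Y ∧ e * X ≤ -A + 1 := by
    rcases le_total 0 a₀ with h | h
    · exact ⟨1, abs_one, by simpa using h, by simpa using hL⟩
    · obtain ⟨X, Y, hXY, hX⟩ := hR
      exact ⟨-1, by norm_num, by linarith, X, Y, hXY, by linarith⟩
  obtain ⟨f, hf, hfa, Xb, Yb, hb, hYb⟩ : ∃ f : ℝ, |f| = 1 ∧ 0 ≤ f * a₁ ∧
      ∃ X Y, InWedge A B a₀ a₁ w₀ w₁ X Y ∧ f * Y ≤ -B + 1 := by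
    rcases le_total 0 a₁ with h | h
    · exact ⟨1, abs_one, by simpa using h, by simpa using hD⟩
    · obtain ⟨X, Y, hXY, hY⟩ := hU
      exact ⟨-1, by norm_num, by linarith, X, Y, hXY, by linarith⟩
  have he₂ : e ^ 2 = 1 := by rw [← sq_abs, he, one_pow]
  have hf₂ : f ^ 2 = 1 := by rw [← sq_abs, hf, one_pow]
  have he₀ : e ≠ 0 := abs_ne_zero.mp (by simp [he])
  have hf₀ : f ≠ 0 := abs_ne_zero.mp (by simp [hf])
  have := le_eight_of_nonneg hA hB hea hfa
    (by linear_combination ha + a₀ ^ 2 * he₂ + a₁ ^ 2 * hf₂)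
    (hw.imp (mul_ne_zero he₀) (mul_ne_zero hf₀)) (hl.reflect he hf) hXl (hb.reflect he hf) hYb
    (hq.reflect he hf)
  linear_combination this - (a₀ * X) * he₂ - (a₁ * Y) * hf₂

end InWedge

namespace AARect

def wedge (R : AARect) (u w : Pt) : Set Pt :=
  R.set ∩ {q | 0 ≤ ⟪u, q - R.center⟫} ∩ {q | 0 ≤ ⟪w, q - (R.center + (2 : ℝ) • u)⟫}

lemma inWedge_of_mem_wedge {R : AARect} {u w q : Pt} (hq : q ∈ R.wedge u w) :
    InWedge ((R.xmax - R.xmin) / 2) ((R.ymax - R.ymin) / 2) (u 0) (u 1) (w 0) (w 1)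
      ((q - R.center) 0) ((q - R.center) 1) := by
  obtain ⟨⟨hR, h₁⟩, h₂⟩ := hq
  obtain ⟨hX, hY⟩ := mem_set_iff.mp hR
  refine ⟨hX, hY, by simpa [inner_fin_two] using h₁, ?_⟩
  simp only [Set.mem_ofPred_eq, inner_fin_two, PiLp.sub_apply, PiLp.add_apply,
    PiLp.smul_apply, smul_eq_mul] at h₂ ⊢
  linarith

lemma inner_le_eight_of_strips {R : AARect} {u w : Pt}
    (h4x : 4 ≤ R.xmax - R.xmin) (h4y : 4 ≤ R.ymax - R.ymin) (hu : ‖u‖ = 1) (hw : w ≠ 0)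
    (hL : ∃ q ∈ R.wedge u w, q 0 < R.xmin + 1) (hR : ∃ q ∈ R.wedge u w, R.xmax - 1 < q 0)
    (hD : ∃ q ∈ R.wedge u w, q 1 < R.ymin + 1) (hU : ∃ q ∈ R.wedge u w, R.ymax - 1 < q 1) :
    ∀ q ∈ R.wedge u w, ⟪u, q - R.center⟫ ≤ 8 := by
  have hw' : w 0 ≠ 0 ∨ w 1 ≠ 0 := by
    by_contra! h
    exact hw (by ext i; fin_cases i <;> simp [h.1, h.2])
  obtain ⟨ql, hql, hl⟩ := hL
  obtain ⟨qr, hqr, hr⟩ := hR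
  obtain ⟨qd, hqd, hd⟩ := hD
  obtain ⟨qu, hqu, hu'⟩ := hU
  intro q hq
  rw [inner_fin_two]
  refine (inWedge_of_mem_wedge hq).le_eight (by linarith) (by linarith)
    (sq_add_sq_of_norm_eq_one hu) hw' ⟨_, _, inWedge_of_mem_wedge hql, ?_⟩
    ⟨_, _, inWedge_of_mem_wedge hqr, ?_⟩ ⟨_, _, inWedge_of_mem_wedge hqd, ?_⟩
    ⟨_, _, inWedge_of_mem_wedge hqu, ?_⟩ <;>
  simp only [PiLp.sub_apply, R.center_zero, R.center_one] <;> linarith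

end AARect

/-- Key reduction lemma: in an axis-aligned rectangle `R` with all sides of length at
least 4 and center `p`, for every half-plane hint `H₁` at `p` there is a point `p' ∈ R`
at distance at most 2 from `p` such that, whatever half-plane hint `H₂` is received
at `p'`, there are a sub-rectangle `Rec ⊆ R` and a polygonal path from `p` to the center
of `Rec` that passes within distance 1 of every point of `(R ∩ H₁ ∩ H₂) \ Rec`, with
`Perimeter(R) − Perimeter(Rec) ≥ 2` and the length of the path at most
`21·(Perimeter(R) − Perimeter(Rec))`. -/
theorem reduceRectangle (R : AARect)
    (h4x : 4 ≤ R.xmax - R.xmin) (h4y : 4 ≤ R.ymax - R.ymin)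
    (H₁ : Set Pt) (hH₁ : IsHalfPlaneThrough H₁ R.center) :
    ∃ p' ∈ R.set, dist R.center p' ≤ 2 ∧
      ∀ H₂ : Set Pt, IsHalfPlaneThrough H₂ p' →
        ∃ Rec : AARect, Rec.set ⊆ R.set ∧
          ∃ (N : ℕ) (v : Fin (N + 1) → Pt),
            v 0 = R.center ∧ v (Fin.last N) = Rec.center ∧
            (∀ q ∈ (R.set ∩ H₁ ∩ H₂) \ Rec.set, ∃ y ∈ polySet v, dist q y ≤ 1) ∧
            2 ≤ R.perim - Rec.perim ∧
            polyLength v ≤ 21 * (R.perim - Rec.perim) := by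
  obtain ⟨u, hu, rfl⟩ := hH₁.exists_norm_eq_one
  refine ⟨R.center + (2 : ℝ) • u, ?_, by simp [norm_smul, hu], ?_⟩
  · have h₀ := abs_apply_le_of_norm_eq_one hu 0
    have h₁ := abs_apply_le_of_norm_eq_one hu 1
    simp only [AARect.mem_set_iff, add_sub_cancel_left, PiLp.smul_apply, smul_eq_mul, abs_mul,
      abs_two]
    constructor <;> linarith
  rintro H₂ ⟨w, hw, rfl⟩
  have hK : R.wedge u w ⊆ R.set := fun q hq => hq.1.1
  rcases R.reduces_or_strips hK h4x h4y with h | ⟨hL, hR, hD, hU⟩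
  · exact h
  · exact R.reduces_of_subset_band h4x h4y hu fun q hq =>
      ⟨hq.1.1, hq.1.2, R.inner_le_eight_of_strips h4x h4y hu hw hL hR hD hU q hq⟩
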